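/- Let \overline{W}(y_1,y_2) = \langle y_2\rangle\,\overline{W}_{1d}(\langle y_2\rangle^{-3} y_1). Then \partial_{y_2}\overline{W}(y_1,y_2) = 2 y_2\, \overline{W}(y_1,y_2)\, \partial_{y_1}\overline{W}(y_1,y_2) at every point, and |\partial_{y_2}\overline{W}(y_1,y_2)| \le \sqrt{3}/3 for all (y_1,y_2). -/

import Mathlib

lemma W1d_hasDerivAt (W1d : ℝ → ℝ) (h : ∀ y : ℝ, (W1d y) ^ 3 + W1d y + y = 0) (y : ℝ) :
    HasDerivAt W1d (-(1 + 3 * (W1d y) ^ 2))⁻¹ y := by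
  have hmono : StrictMono (fun w : ℝ => w ^ 3 + w) := by
    intro a b hab
    show a ^ 3 + a < b ^ 3 + b
    nlinarith [sq_nonneg (a + b), sq_nonneg a, sq_nonneg b, sq_nonneg (a - b)]
  have hsurj : Function.Surjective (fun w : ℝ => w ^ 3 + w) := fun z =>
    ⟨W1d (-z), by have := h (-z); simp only; linarith⟩
  set φ := StrictMono.orderIsoOfSurjective _ hmono hsurj with hφ
  have hWeq : ∀ t : ℝ, W1d t = φ.symm (-t) := by
    intro t
    apply hmono.injective
    show (W1d t) ^ 3 + W1d t = (φ.symm (-t)) ^ 3 + φ.symm (-t)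
    have h2 : φ (φ.symm (-t)) = -t := φ.apply_symm_apply _
    have h3 : φ (φ.symm (-t)) = (φ.symm (-t)) ^ 3 + φ.symm (-t) := rfl
    have := h t
    rw [h3] at h2
    linarith
  have hcont : ContinuousAt W1d y := by
    have hc : Continuous fun t : ℝ => φ.symm (-t) :=
      φ.symm.continuous.comp continuous_neg
    have : W1d = fun t : ℝ => φ.symm (-t) := funext hWeq
    rw [this]
    exact hc.continuousAt
  have hF : HasDerivAt (fun w : ℝ => -(w ^ 3 + w)) (-(1 + 3 * (W1d y) ^ 2)) (W1d y) := by
    have := ((hasDerivAt_pow 3 (W1d y)).add (hasDerivAt_id (W1d y))).neg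
    refine this.congr_deriv ?_
    push_cast
    ring
  have hne : (-(1 + 3 * (W1d y) ^ 2) : ℝ) ≠ 0 := by nlinarith [sq_nonneg (W1d y)]
  exact HasDerivAt.of_local_left_inverse hcont hF hne
    (Filter.Eventually.of_forall fun t => by have := h t; linarith)

set_option maxHeartbeats 2000000 in
/-- The identity `∂₂W̄ = 2 y₂ W̄ ∂₁W̄` and the bound `|∂₂W̄| ≤ √3/3` for the 2D
self-similar Burgers profile. -/
theorem burgers_profile_2d_d2_bound (W1d : ℝ → ℝ)
    (h : ∀ y : ℝ, (W1d y) ^ 3 + W1d y + y = 0) :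
    let Wbar : ℝ × ℝ → ℝ := fun p =>
      Real.sqrt (1 + p.2 ^ 2) * W1d (p.1 / (Real.sqrt (1 + p.2 ^ 2)) ^ 3)
    ∀ p : ℝ × ℝ,
      fderiv ℝ Wbar p (0, 1) = 2 * p.2 * Wbar p * fderiv ℝ Wbar p (1, 0) ∧
      |fderiv ℝ Wbar p (0, 1)| ≤ Real.sqrt 3 / 3 := by
  intro Wbar p
  set s : ℝ := Real.sqrt (1 + p.2 ^ 2) with hsdef
  have hsq : (0:ℝ) < 1 + p.2 ^ 2 := by positivity
  have hs2 : s ^ 2 = 1 + p.2 ^ 2 := Real.sq_sqrt hsq.le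
  have hs0 : 0 < s := Real.sqrt_pos.mpr hsq
  have hs3 : s ^ 3 ≠ 0 := by positivity
  set u : ℝ := p.1 / s ^ 3 with hu
  set w : ℝ := W1d u with hw
  set c : ℝ := 1 + 3 * w ^ 2 with hc
  have hc0 : 0 < c := by nlinarith [sq_nonneg w]
  -- derivative of t ↦ sqrt (1 + t^2) at p.2
  have hA : HasDerivAt (fun t : ℝ => Real.sqrt (1 + t ^ 2)) (p.2 / s) p.2 := by
    have h1 : HasDerivAt (fun t : ℝ => 1 + t ^ 2) (2 * p.2) p.2 := by
      simpa using ((hasDerivAt_pow 2 p.2).const_add 1)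
    have h2 := (Real.hasDerivAt_sqrt hsq.ne').comp p.2 h1
    refine h2.congr_deriv ?_
    field_simp
    ring
  have hA3 : HasDerivAt (fun t : ℝ => (Real.sqrt (1 + t ^ 2)) ^ 3) (3 * s ^ 2 * (p.2 / s)) p.2 := by
    simpa [← hsdef, Pi.pow_def] using hA.pow 3
  have hInv : HasDerivAt (fun t : ℝ => ((Real.sqrt (1 + t ^ 2)) ^ 3)⁻¹)
      (-(3 * s ^ 2 * (p.2 / s)) / (s ^ 3) ^ 2) p.2 := by
    have := hA3.inv (by simpa [← hsdef] using hs3)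
    simpa [← hsdef, Pi.inv_def] using this
  have hsnd : HasFDerivAt (fun q : ℝ × ℝ => q.2) (ContinuousLinearMap.snd ℝ ℝ ℝ) p :=
    hasFDerivAt_snd
  have hfst : HasFDerivAt (fun q : ℝ × ℝ => q.1) (ContinuousLinearMap.fst ℝ ℝ ℝ) p :=
    hasFDerivAt_fst
  have hInvF : HasFDerivAt (fun q : ℝ × ℝ => ((Real.sqrt (1 + q.2 ^ 2)) ^ 3)⁻¹)
      ((-(3 * s ^ 2 * (p.2 / s)) / (s ^ 3) ^ 2) • ContinuousLinearMap.snd ℝ ℝ ℝ) p :=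
    hInv.comp_hasFDerivAt p hsnd
  have hg : HasFDerivAt (fun q : ℝ × ℝ => q.1 / (Real.sqrt (1 + q.2 ^ 2)) ^ 3)
      (p.1 • ((-(3 * s ^ 2 * (p.2 / s)) / (s ^ 3) ^ 2) • ContinuousLinearMap.snd ℝ ℝ ℝ) +
        ((s ^ 3)⁻¹) • ContinuousLinearMap.fst ℝ ℝ ℝ) p := by
    have := hfst.mul hInvF
    simp only [← hsdef] at this
    simpa [div_eq_mul_inv, Pi.mul_def] using this
  have hWc : HasFDerivAt (fun q : ℝ × ℝ => W1d (q.1 / (Real.sqrt (1 + q.2 ^ 2)) ^ 3))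
      ((-(1 + 3 * w ^ 2))⁻¹ •
        (p.1 • ((-(3 * s ^ 2 * (p.2 / s)) / (s ^ 3) ^ 2) • ContinuousLinearMap.snd ℝ ℝ ℝ) +
          ((s ^ 3)⁻¹) • ContinuousLinearMap.fst ℝ ℝ ℝ)) p := by
    have := (W1d_hasDerivAt W1d h u).comp_hasFDerivAt p (by simpa [← hsdef] using hg)
    simpa [Function.comp_def, ← hsdef, ← hu, ← hw] using this
  have hAF : HasFDerivAt (fun q : ℝ × ℝ => Real.sqrt (1 + q.2 ^ 2))
      ((p.2 / s) • ContinuousLinearMap.snd ℝ ℝ ℝ) p := hA.comp_hasFDerivAt p hsnd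
  have hWbar : HasFDerivAt Wbar
      (s • ((-(1 + 3 * w ^ 2))⁻¹ •
        (p.1 • ((-(3 * s ^ 2 * (p.2 / s)) / (s ^ 3) ^ 2) • ContinuousLinearMap.snd ℝ ℝ ℝ) +
          ((s ^ 3)⁻¹) • ContinuousLinearMap.fst ℝ ℝ ℝ)) +
        w • ((p.2 / s) • ContinuousLinearMap.snd ℝ ℝ ℝ)) p := by
    have := hAF.mul hWc
    simpa [← hsdef, ← hu, ← hw, Pi.mul_def] using this
  have hfd := hWbar.fderiv
  rw [hfd]
  have hWbp : Wbar p = s * w := by simp [Wbar, ← hsdef, ← hu, ← hw]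
  -- evaluate
  have e1 : (s • ((-(1 + 3 * w ^ 2))⁻¹ •
        (p.1 • ((-(3 * s ^ 2 * (p.2 / s)) / (s ^ 3) ^ 2) • ContinuousLinearMap.snd ℝ ℝ ℝ) +
          ((s ^ 3)⁻¹) • ContinuousLinearMap.fst ℝ ℝ ℝ)) +
        w • ((p.2 / s) • ContinuousLinearMap.snd ℝ ℝ ℝ)) ((1:ℝ), (0:ℝ))
      = s * ((-(c))⁻¹ * (s ^ 3)⁻¹) := by
    simp [ContinuousLinearMap.add_apply, ContinuousLinearMap.smul_apply, hc, mul_comm]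
  have e2 : (s • ((-(1 + 3 * w ^ 2))⁻¹ •
        (p.1 • ((-(3 * s ^ 2 * (p.2 / s)) / (s ^ 3) ^ 2) • ContinuousLinearMap.snd ℝ ℝ ℝ) +
          ((s ^ 3)⁻¹) • ContinuousLinearMap.fst ℝ ℝ ℝ)) +
        w • ((p.2 / s) • ContinuousLinearMap.snd ℝ ℝ ℝ)) ((0:ℝ), (1:ℝ))
      = s * ((-(c))⁻¹ * (p.1 * (-(3 * s ^ 2 * (p.2 / s)) / (s ^ 3) ^ 2))) + w * (p.2 / s) := by
    simp [ContinuousLinearMap.add_apply, ContinuousLinearMap.smul_apply, hc]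
  rw [e1, e2, hWbp]
  have hcub : w ^ 3 + w + u = 0 := h u
  clear_value s u w c
  -- key algebra: p.1 = -(w^3+w) * s^3
  have hp1 : p.1 = -(w ^ 3 + w) * s ^ 3 := by
    have hueq : u = -(w ^ 3 + w) := by linarith
    rw [← hueq, hu]
    field_simp
  have hclosed : s * ((-(c))⁻¹ * (p.1 * (-(3 * s ^ 2 * (p.2 / s)) / (s ^ 3) ^ 2))) + w * (p.2 / s)
      = -(2 * p.2 * w) / (s * c) := by
    rw [hp1, hc]
    have hcne : (1 + 3 * w ^ 2 : ℝ) ≠ 0 := by nlinarith [sq_nonneg w]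
    simp only [inv_neg]
    field_simp [hs0.ne', hcne]
    ring
  constructor
  · rw [hclosed]
    field_simp
  · rw [hclosed]
    have hsrt3 : Real.sqrt 3 ^ 2 = 3 := Real.sq_sqrt (by norm_num)
    have hs3pos : (0:ℝ) < Real.sqrt 3 := Real.sqrt_pos.mpr (by norm_num)
    have hsc : (0:ℝ) < s * c := mul_pos hs0 hc0
    have habs : |(-(2 * p.2 * w)) / (s * c)| = 2 * |p.2| * |w| / (s * c) := by
      rw [abs_div, abs_neg, abs_of_pos hsc, abs_mul, abs_mul]
      norm_num
    rw [habs]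
    have h1 : 0 ≤ Real.sqrt 3 * c - 6 * |w| := by
      nlinarith [sq_nonneg (Real.sqrt 3 * |w| - 1), hsrt3, hs3pos.le, sq_abs w]
    have h2 : |p.2| ≤ s := by
      nlinarith [sq_abs p.2, abs_nonneg p.2, hs2, hs0]
    rw [div_le_div_iff₀ hsc (by norm_num : (0:ℝ) < 3)]
    have h3 : 0 ≤ s * (Real.sqrt 3 * c - 6 * |w|) := mul_nonneg hs0.le h1
    have h4 : 2 * |p.2| * |w| ≤ 2 * s * |w| := by
      nlinarith [mul_le_mul_of_nonneg_right h2 (abs_nonneg w)]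
    nlinarith [h3, h4]
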